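/- Let K be an antilinear isometric involution on L²(ℝ) and P_t the projection onto L²(-∞,t) (multiplication by the indicator of (-∞,t)). Define V_t = L²(t,∞) ∩ K(L²(t,∞)) (functions f with supp f ⊆ [t,∞) and supp Kf ⊆ [t,∞)). Suppose ‖P_t K P_t‖ < 1 as an operator on L²(-∞,t). Then the orthogonal complement of V_t in L²(ℝ) equals L²(-∞,t) + K(L²(-∞,t)), and this sum is closed. -/

import Mathlib

open MeasureTheory

/-!
For `a, b ∈ L²(-∞,t)` the bound `‖P K P‖ ≤ c < 1` gives
`‖a + K b‖² ≥ (1 - c) (‖a‖² + ‖b‖²)`, so `(a, b) ↦ a + K b` is antilipschitz on the complete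
space `L²(-∞,t) × L²(-∞,t)` and its range `L²(-∞,t) + K L²(-∞,t)` is closed. Since `K` is
self-adjoint, the orthogonal complement of `K L²(-∞,t)` is `K⁻¹ L²(t,∞)`, so the complement of
the sum is `V_t`, and `V_tᗮ` is the closure of the sum, i.e. the sum itself.
-/

namespace Submodule

variable {E : Type*} [NormedAddCommGroup E] [InnerProductSpace ℂ E] (U : Submodule ℂ E)

theorem orthogonal_map_eq_comap_orthogonal (K : E →ₗ⋆[ℂ] E)
    (hK : ∀ f g, inner ℂ (K f) g = starRingEnd ℂ (inner ℂ f (K g))) :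
    (U.map K)ᗮ = Uᗮ.comap K := by
  ext f
  rw [mem_orthogonal, mem_comap, mem_orthogonal]
  refine ⟨fun h u hu => ?_, fun h _ ⟨u, hu, hKu⟩ => ?_⟩
  · have := h (K u) (mem_map_of_mem hu)
    rwa [hK, map_eq_zero] at this
  · rw [← hKu, hK, h u hu, map_zero]

variable (K : E →ₗᵢ⋆[ℂ] E)

theorem one_sub_mul_le_norm_add_apply_sq [U.HasOrthogonalProjection] {c : ℝ} (hc₀ : 0 ≤ c)
    (hc : ∀ f ∈ U, ‖U.starProjection (K f)‖ ≤ c * ‖f‖) {a b : E} (ha : a ∈ U) (hb : b ∈ U) :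
    (1 - c) * (‖a‖ ^ 2 + ‖b‖ ^ 2) ≤ ‖a + K b‖ ^ 2 := by
  have hinner : |RCLike.re (inner ℂ a (K b))| ≤ ‖a‖ * (c * ‖b‖) :=
    calc |RCLike.re (inner ℂ a (K b))|
        = |RCLike.re (inner ℂ a (U.starProjection (K b)))| := by
          rw [← U.inner_starProjection_left_eq_right, U.starProjection_eq_self_iff.mpr ha]
      _ ≤ ‖a‖ * ‖U.starProjection (K b)‖ :=
          (RCLike.abs_re_le_norm _).trans (norm_inner_le_norm _ _)
      _ ≤ ‖a‖ * (c * ‖b‖) := by gcongr; exact hc b hb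
  rw [norm_add_sq (𝕜 := ℂ), K.norm_map]
  nlinarith [abs_le.mp hinner, mul_nonneg hc₀ (sq_nonneg (‖a‖ - ‖b‖))]

theorem isClosed_sup_map [CompleteSpace U] {c : ℝ} (hc₀ : 0 ≤ c) (hc₁ : c < 1)
    (hc : ∀ f ∈ U, ‖U.starProjection (K f)‖ ≤ c * ‖f‖) :
    IsClosed ((U ⊔ U.map K.toLinearMap : Submodule ℂ E) : Set E) := by
  let F : U × U →+ E :=
    U.subtype.toAddMonoidHom.coprod (K.toLinearMap.toAddMonoidHom.comp U.subtype.toAddMonoidHom)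
  have hF : Set.range F = (U ⊔ U.map K.toLinearMap : Submodule ℂ E) := by
    ext x
    simp [F, mem_sup]
  have hbound : ∀ p, ‖p‖ ≤ (Real.sqrt (1 - c))⁻¹ * ‖F p‖ := by
    rintro ⟨a, b⟩
    have hmax : ‖(a, b)‖ ^ 2 ≤ ‖(a : E)‖ ^ 2 + ‖(b : E)‖ ^ 2 := by
      rw [Prod.norm_mk, norm_coe, norm_coe]
      rcases max_choice ‖a‖ ‖b‖ with h | h <;> rw [h] <;> nlinarith [sq_nonneg ‖a‖, sq_nonneg ‖b‖]
    rw [le_inv_mul_iff₀ (by simpa using hc₁)]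
    refine (pow_le_pow_iff_left₀ (by positivity) (norm_nonneg _) two_ne_zero).mp ?_
    calc (Real.sqrt (1 - c) * ‖(a, b)‖) ^ 2 = (1 - c) * ‖(a, b)‖ ^ 2 := by
          rw [mul_pow, Real.sq_sqrt (by linarith)]
      _ ≤ (1 - c) * (‖(a : E)‖ ^ 2 + ‖(b : E)‖ ^ 2) := by gcongr
      _ ≤ ‖F (a, b)‖ ^ 2 := one_sub_mul_le_norm_add_apply_sq U K hc₀ hc a.2 b.2
  rw [← hF]
  refine (AddMonoidHomClass.antilipschitz_of_bound F (K := ⟨_, by positivity⟩) hbound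
    ).isClosed_range (uniformContinuous_addMonoidHom_of_continuous ?_)
  change Continuous fun p : U × U => (p.1 : E) + K p.2
  fun_prop

theorem orthogonal_inf_comap_orthogonal_eq_sup_map [CompleteSpace E] [CompleteSpace U] {c : ℝ}
    (hc₀ : 0 ≤ c) (hc₁ : c < 1) (hc : ∀ f ∈ U, ‖U.starProjection (K f)‖ ≤ c * ‖f‖)
    (hK : ∀ f g, inner ℂ (K f) g = starRingEnd ℂ (inner ℂ f (K g))) :
    (Uᗮ ⊓ Uᗮ.comap K.toLinearMap)ᗮ = U ⊔ U.map K.toLinearMap := by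
  rw [← orthogonal_map_eq_comap_orthogonal U K.toLinearMap hK, inf_orthogonal,
    orthogonal_orthogonal_eq_closure,
    (isClosed_sup_map U K hc₀ hc₁ hc).submodule_topologicalClosure_eq]

end Submodule

theorem isStarProjection_of_coeFn_eq_indicator {α 𝕜 : Type*} [RCLike 𝕜] [MeasurableSpace α]
    {μ : Measure α} {s : Set α} (P : Lp 𝕜 2 μ →L[𝕜] Lp 𝕜 2 μ)
    (hP : ∀ f : Lp 𝕜 2 μ, (P f : α → 𝕜) =ᵐ[μ] s.indicator f) : IsStarProjection P := by
  refine P.isStarProjection_iff_isSymmetricProjection.mpr ⟨?_, fun f g => ?_⟩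
  · refine LinearMap.ext fun f => Lp.ext ?_
    filter_upwards [hP (P f), hP f] with x hPPf hPf
    by_cases hx : x ∈ s <;> simp [hPPf, hPf, hx]
  · rw [ContinuousLinearMap.coe_coe, L2.inner_def, L2.inner_def]
    refine integral_congr_ae ?_
    filter_upwards [hP f, hP g] with x hPf hPg
    by_cases hx : x ∈ s <;> simp [hPf, hPg, hx]

theorem stmt19_general (t : ℝ)
    (K : Lp ℂ 2 (volume : Measure ℝ) → Lp ℂ 2 (volume : Measure ℝ))
    (hK_add : ∀ f g, K (f + g) = K f + K g)
    (hK_smul : ∀ (a : ℂ) f, K (a • f) = (starRingEnd ℂ) a • K f)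
    (hK_isom : ∀ f, ‖K f‖ = ‖f‖)
    (hK_sa : ∀ f g, (inner ℂ (K f) g : ℂ) = (starRingEnd ℂ) (inner ℂ f (K g) : ℂ))
    (P : Lp ℂ 2 (volume : Measure ℝ) →L[ℂ] Lp ℂ 2 (volume : Measure ℝ))
    (hP : ∀ f : Lp ℂ 2 (volume : Measure ℝ),
      (P f : ℝ → ℂ) =ᵐ[volume] Set.indicator (Set.Iio t) f)
    (hnorm : ∃ c : ℝ, c < 1 ∧ ∀ f, P f = f → ‖P (K f)‖ ≤ c * ‖f‖) :
    {g : Lp ℂ 2 (volume : Measure ℝ) |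
        ∀ f, (P f = 0 ∧ P (K f) = 0) → (inner ℂ f g : ℂ) = 0}
      = {g | ∃ h₁ h₂, P h₁ = h₁ ∧ P h₂ = h₂ ∧ g = h₁ + K h₂} ∧
    IsClosed {g : Lp ℂ 2 (volume : Measure ℝ) |
        ∃ h₁ h₂, P h₁ = h₁ ∧ P h₂ = h₂ ∧ g = h₁ + K h₂} := by
  obtain ⟨c, hc₁, hc⟩ := hnorm
  let K' : Lp ℂ 2 (volume : Measure ℝ) →ₗᵢ⋆[ℂ] Lp ℂ 2 (volume : Measure ℝ) :=
    { toFun := K, map_add' := hK_add, map_smul' := hK_smul, norm_map' := hK_isom }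
  obtain ⟨U, _, rfl⟩ :=
    isStarProjection_iff_eq_starProjection.mp (isStarProjection_of_coeFn_eq_indicator P hP)
  have : CompleteSpace U := (U.orthogonal_orthogonal ▸ Uᗮ.isClosed_orthogonal).completeSpace_coe
  have hc₀' : 0 ≤ max c 0 := le_max_right c 0
  have hc₁' : max c 0 < 1 := max_lt hc₁ one_pos
  have hc' : ∀ f ∈ U, ‖U.starProjection (K' f)‖ ≤ max c 0 * ‖f‖ := fun f hf =>
    (hc f (U.starProjection_eq_self_iff.mpr hf)).trans (by gcongr; exact le_max_left c 0)
  have hS : {g | ∃ h₁ h₂, U.starProjection h₁ = h₁ ∧ U.starProjection h₂ = h₂ ∧ g = h₁ + K h₂}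
      = ((U ⊔ U.map K'.toLinearMap : Submodule ℂ _) : Set (Lp ℂ 2 (volume : Measure ℝ))) := by
    ext g
    simp only [Set.mem_ofPred_eq, SetLike.mem_coe, Submodule.mem_sup, Submodule.mem_map,
      Submodule.starProjection_eq_self_iff]
    constructor
    · rintro ⟨h₁, h₂, h₁U, h₂U, rfl⟩
      exact ⟨h₁, h₁U, K h₂, ⟨h₂, h₂U, rfl⟩, rfl⟩
    · rintro ⟨h₁, h₁U, _, ⟨h₂, h₂U, rfl⟩, rfl⟩
      exact ⟨h₁, h₂, h₁U, h₂U, rfl⟩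
  have hV : {g | ∀ f, (U.starProjection f = 0 ∧ U.starProjection (K f) = 0) → inner ℂ f g = 0}
      = (((Uᗮ ⊓ Uᗮ.comap K'.toLinearMap)ᗮ : Submodule ℂ _) :
          Set (Lp ℂ 2 (volume : Measure ℝ))) := by
    ext g
    simp [Submodule.mem_orthogonal, Submodule.starProjection_apply_eq_zero_iff, K']
  rw [hS, hV, U.orthogonal_inf_comap_orthogonal_eq_sup_map K' hc₀' hc₁' hc' hK_sa]
  exact ⟨rfl, U.isClosed_sup_map K' hc₀' hc₁' hc'⟩

/-- Let `K` be an antilinear isometric self-adjoint involution (conjugation) on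
`L²(ℝ)` and `P = P_t` the orthogonal projection onto `L²(-∞, t)` (multiplication
by the indicator of `(-∞, t)`).  Let `V_t = L²(t,∞) ∩ K L²(t,∞)`, i.e. the set
of `f` with `P f = 0` and `P (K f) = 0`.  If `‖P K P‖ < 1` as an operator on
`L²(-∞,t)`, then the orthogonal complement of `V_t` equals
`L²(-∞,t) + K(L²(-∞,t))`, and this sum is closed. -/
theorem stmt19 (t : ℝ)
    (K : Lp ℂ 2 (volume : Measure ℝ) → Lp ℂ 2 (volume : Measure ℝ))
    (hK_add : ∀ f g, K (f + g) = K f + K g)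
    (hK_smul : ∀ (a : ℂ) f, K (a • f) = (starRingEnd ℂ) a • K f)
    (hK_isom : ∀ f, ‖K f‖ = ‖f‖)
    (hK_inv : ∀ f, K (K f) = f)
    (hK_sa : ∀ f g, (inner ℂ (K f) g : ℂ) = (starRingEnd ℂ) (inner ℂ f (K g) : ℂ))
    (P : Lp ℂ 2 (volume : Measure ℝ) →L[ℂ] Lp ℂ 2 (volume : Measure ℝ))
    (hP : ∀ f : Lp ℂ 2 (volume : Measure ℝ),
      (P f : ℝ → ℂ) =ᵐ[volume] Set.indicator (Set.Iio t) f)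
    (hnorm : ∃ c : ℝ, c < 1 ∧ ∀ f, P f = f → ‖P (K f)‖ ≤ c * ‖f‖) :
    {g : Lp ℂ 2 (volume : Measure ℝ) |
        ∀ f, (P f = 0 ∧ P (K f) = 0) → (inner ℂ f g : ℂ) = 0}
      = {g | ∃ h₁ h₂, P h₁ = h₁ ∧ P h₂ = h₂ ∧ g = h₁ + K h₂} ∧
    IsClosed {g : Lp ℂ 2 (volume : Measure ℝ) |
        ∃ h₁ h₂, P h₁ = h₁ ∧ P h₂ = h₂ ∧ g = h₁ + K h₂} :=
  stmt19_general t K hK_add hK_smul hK_isom hK_sa P hP hnorm
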